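/- Let G be a K₂-hypohamiltonian finite simple graph. Then every vertex lying on a 4-cycle of G has degree at least 4 in G. -/

import Mathlib

/- Definitions following "Generation and New Infinite Families of K₂-hypohamiltonian Graphs"
by Goedgebeur, Renders and Zamfirescu. -/

open scoped Classical

noncomputable section

namespace K2HypoPaper

variable {V : Type}

/-- A graph is *hamiltonian* if it contains a cycle passing through every vertex exactly once. -/
def IsHamiltonianGraph (G : SimpleGraph V) : Prop :=
  ∃ (a : V) (p : G.Walk a a), p.IsHamiltonianCycle

/-- A graph is *K₂-hamiltonian* if deleting the two endpoints of any edge yields a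
hamiltonian graph. -/
def IsK2Hamiltonian (G : SimpleGraph V) : Prop :=
  ∀ u v : V, G.Adj u v → IsHamiltonianGraph (G.induce {x : V | x ≠ u ∧ x ≠ v})

/-- A graph is *hypohamiltonian* if it is non-hamiltonian and every vertex-deleted
subgraph is hamiltonian. -/
def IsHypohamiltonian (G : SimpleGraph V) : Prop :=
  ¬ IsHamiltonianGraph G ∧ ∀ v : V, IsHamiltonianGraph (G.induce {x : V | x ≠ v})

/-- A graph is *K₂-hypohamiltonian* if it is non-hamiltonian and K₂-hamiltonian. -/
def IsK2Hypohamiltonian (G : SimpleGraph V) : Prop :=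
  ¬ IsHamiltonianGraph G ∧ IsK2Hamiltonian G

end K2HypoPaper

/-! Let `G` be non-hamiltonian with a 4-cycle `u v w x`, and let `C` be a hamiltonian cycle of
`G - v - w`. The two neighbours of `u` on `C` are distinct neighbours of `u` in `G` other than `v`,
and neither is `x`: otherwise replacing the edge `u x` of `C` by the path `u v w x` would give a
hamiltonian cycle of `G`. So `u` has the four neighbours `v`, `x` and its two neighbours on `C`. -/

namespace SimpleGraph.Walk

variable {W : Type} {H : SimpleGraph W} {a b : W}

theorem IsPath.cons_isCycle_of_two_le_length {q : H.Walk a b} (hq : q.IsPath) (h : H.Adj b a)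
    (hlen : 2 ≤ q.length) : (cons h q).IsCycle := by
  refine (cons_isCycle_iff q h).mpr ⟨hq, fun hmem => ?_⟩
  have hb : b = q.snd := hq.eq_snd_of_mem_edges (Sym2.eq_swap ▸ hmem)
  have : q.length = 1 :=
    hq.getVert_injOn (by simp) (by simp; omega) (by rw [getVert_length]; exact hb)
  omega

variable [DecidableEq W]

theorem IsHamiltonianCycle.reverse {p : H.Walk a a} (hp : p.IsHamiltonianCycle) :
    p.reverse.IsHamiltonianCycle := by
  have := hp.finite
  have := Fintype.ofFinite W
  rw [isHamiltonianCycle_iff_isCycle_and_length_eq] at hp ⊢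
  exact ⟨hp.1.reverse, by rw [length_reverse, hp.2]⟩

theorem IsHamiltonian.cons_isHamiltonianCycle {q : H.Walk a b} (hq : q.IsHamiltonian)
    (h : H.Adj b a) (hlen : 2 ≤ q.length) : (cons h q).IsHamiltonianCycle :=
  ⟨hq.isPath.cons_isCycle_of_two_le_length h hlen, by simpa [IsHamiltonian] using hq⟩

theorem IsHamiltonianCycle.exists_two_adj_isHamiltonian_to {p : H.Walk a a}
    (hp : p.IsHamiltonianCycle) (y : W) :
    ∃ b c, b ≠ c ∧ H.Adj y b ∧ H.Adj y c ∧
      (∃ q : H.Walk b y, q.IsHamiltonian) ∧ ∃ q : H.Walk c y, q.IsHamiltonian := by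
  set p' := p.rotate y (hp.mem_support y)
  have hp' : p'.IsHamiltonianCycle := hp.rotate _
  refine ⟨p'.snd, p'.reverse.snd, ?_, adj_snd hp'.not_nil, adj_snd hp'.reverse.not_nil,
    ⟨_, hp'.isHamiltonian_tail⟩, ⟨_, hp'.reverse.isHamiltonian_tail⟩⟩
  rw [snd_reverse]
  exact hp'.isCycle.snd_ne_penultimate

end SimpleGraph.Walk

namespace K2HypoPaper

open SimpleGraph Walk

variable {V : Type} {G : SimpleGraph V} {u v w x : V}

theorem isHamiltonianGraph_of_isHamiltonian_induce {x' u' : {z : V | z ≠ v ∧ z ≠ w}}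
    {q : (G.induce {z | z ≠ v ∧ z ≠ w}).Walk x' u'} (hq : q.IsHamiltonian)
    (huv : G.Adj u' v) (hvw : G.Adj v w) (hwx : G.Adj w x') : IsHamiltonianGraph G := by
  let f : G.induce {z | z ≠ v ∧ z ≠ w} →g G := (Embedding.induce _).toHom
  have huv' : G.Adj (f u') v := huv
  have hS : ∀ z ∈ (q.map f).support, z ≠ v ∧ z ≠ w := by
    simp only [Walk.support_map, List.mem_map]
    rintro _ ⟨y, -, rfl⟩
    exact y.2
  have hP : (((q.map f).concat huv').concat hvw).IsPath :=
    ((hq.isPath.map Subtype.val_injective).concat (fun h => (hS v h).1 rfl) huv').concat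
      (by
        rw [support_concat, List.mem_append, List.mem_singleton]
        rintro (h | h)
        exacts [(hS w h).2 rfl, hvw.ne h.symm]) hvw
  refine ⟨_, _, (hP.isHamiltonian_of_mem fun z => ?_).cons_isHamiltonianCycle hwx
    (by rw [length_concat, length_concat]; omega)⟩
  simp only [support_concat, List.mem_append, List.mem_singleton]
  by_cases hz : z ≠ v ∧ z ≠ w
  · rw [Walk.support_map]
    exact .inl (.inl (List.mem_map_of_mem (hq.mem_support ⟨z, hz⟩)))
  · tauto

theorem four_le_ncard_neighborSet_of_isHamiltonianGraph_induce [Finite V]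
    (hG : ¬ IsHamiltonianGraph G) (huw : u ≠ w) (hxv : x ≠ v)
    (huv : G.Adj u v) (hvw : G.Adj v w) (hwx : G.Adj w x) (hxu : G.Adj x u)
    (hham : IsHamiltonianGraph (G.induce {z | z ≠ v ∧ z ≠ w})) :
    4 ≤ (G.neighborSet u).ncard := by
  obtain ⟨_, p, hp⟩ := hham
  -- `IsHamiltonianGraph` uses `Classical.propDecidable` where instance search finds
  -- `Subtype.instDecidableEq`
  replace hp : p.IsHamiltonianCycle := by convert hp
  obtain ⟨b, c, hbc, hub, huc, ⟨qb, hqb⟩, ⟨qc, hqc⟩⟩ :=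
    hp.exists_two_adj_isHamiltonian_to ⟨u, huv.ne, huw⟩
  have hbx : (b : V) ≠ x := fun h =>
    hG (isHamiltonianGraph_of_isHamiltonian_induce hqb huv hvw (h ▸ hwx))
  have hcx : (c : V) ≠ x := fun h =>
    hG (isHamiltonianGraph_of_isHamiltonian_induce hqc huv hvw (h ▸ hwx))
  have hcard : ({v, x, (b : V), (c : V)} : Set V).ncard = 4 :=
    Set.ncard_eq_four.mpr ⟨v, x, b, c, hxv.symm, b.2.1.symm, c.2.1.symm, hbx.symm, hcx.symm,
      Subtype.val_injective.ne hbc, rfl⟩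
  calc 4 = ({v, x, (b : V), (c : V)} : Set V).ncard := hcard.symm
    _ ≤ (G.neighborSet u).ncard := Set.ncard_le_ncard (by
      rintro z (rfl | rfl | rfl | rfl)
      exacts [huv, hxu.symm, hub, huc])

/-- Corollary. In a `K₂`-hypohamiltonian graph, the vertices of a
`4`-cycle have degree at least `4`. -/
theorem fourCycle_degree (V : Type) [Fintype V] (G : SimpleGraph V)
    (hG : IsK2Hypohamiltonian G) (u v w x : V)
    (hdist : u ≠ v ∧ u ≠ w ∧ u ≠ x ∧ v ≠ w ∧ v ≠ x ∧ w ≠ x)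
    (huv : G.Adj u v) (hvw : G.Adj v w) (hwx : G.Adj w x) (hxu : G.Adj x u) :
    4 ≤ (G.neighborSet u).ncard ∧ 4 ≤ (G.neighborSet v).ncard ∧
      4 ≤ (G.neighborSet w).ncard ∧ 4 ≤ (G.neighborSet x).ncard := by
  obtain ⟨-, huw, -, -, hvx, -⟩ := hdist
  obtain ⟨hnh, hK2⟩ := hG
  exact ⟨four_le_ncard_neighborSet_of_isHamiltonianGraph_induce hnh huw hvx.symm
      huv hvw hwx hxu (hK2 v w hvw),
    four_le_ncard_neighborSet_of_isHamiltonianGraph_induce hnh hvx huw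
      hvw hwx hxu huv (hK2 w x hwx),
    four_le_ncard_neighborSet_of_isHamiltonianGraph_induce hnh huw.symm hvx
      hwx hxu huv hvw (hK2 x u hxu),
    four_le_ncard_neighborSet_of_isHamiltonianGraph_induce hnh hvx.symm huw.symm
      hxu huv hvw hwx (hK2 u v huv)⟩

end K2HypoPaper
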